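/- arXiv:0804.3357 — 5 statements merged into one kernel-verified Lean document; each statement's English description precedes it below -/
import Mathlib

section
/- The normaliser of the dihedral subgroup D_{2n}^h (of order 2n, containing the reflection h) in O(2) is the dihedral subgroup D_{4n}^h of order 4n, and hence the Weyl group W_{O(2)}(D_{2n}^h) = N_{O(2)}(D_{2n}^h)/D_{2n}^h has order 2. -/
/-- The group `O(2)` of `2 × 2` real orthogonal matrices. -/
abbrev O2 := Matrix.orthogonalGroup (Fin 2) ℝ

/-- The rotation subgroup `SO(2) ≤ O(2)`, consisting of orthogonal matrices of
determinant one. -/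
def SO2 : Subgroup O2 where
  carrier := {A | (A : Matrix (Fin 2) (Fin 2) ℝ).det = 1}
  mul_mem' := by
    intro a b ha hb
    simp only [Set.mem_setOf_eq, Matrix.UnitaryGroup.mul_val, Matrix.det_mul] at *
    rw [ha, hb, mul_one]
  one_mem' := by simp [Set.mem_setOf_eq]
  inv_mem' := by
    intro a ha
    simp only [Set.mem_setOf_eq, Matrix.UnitaryGroup.inv_val] at *
    simpa [Matrix.star_eq_conjTranspose, Matrix.det_conjTranspose] using ha

/-!
A rotation `g` normalises `D = ⟨s², h⟩` exactly when `g h g⁻¹ = g² h` lies in `D`, that is, when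
`g² = s²ᵐ` for some `m`. Then `g s⁻ᵐ` squares to `1`, and as the only involution of `SO(2)` is
`-1 = sⁿ`, `g` lies in `⟨s⟩`; a reflection `g` reduces to the rotation `g h`. Conversely `D` has
index two in `⟨s, h⟩`, hence is normal in it, and the same index computation is the order of the
Weyl group.
-/

open Subgroup

lemma mem_closure_pair_iff_of_dihedral {G : Type*} [Group G] {a h : G} (hh : h * h = 1)
    (hah : h * a = a⁻¹ * h) {x : G} :
    x ∈ Subgroup.closure {a, h} ↔ ∃ k : ℤ, x = a ^ k ∨ x = a ^ k * h := by
  have hinv : h⁻¹ = h := inv_eq_of_mul_eq_one_right hh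
  have hzpow (k : ℤ) : h * a ^ k = a ^ (-k) * h := by
    rw [← inv_zpow']
    exact (SemiconjBy.zpow_right hah k).eq
  constructor
  · intro hx
    induction hx using Subgroup.closure_induction with
    | mem x hx =>
      rcases hx with rfl | rfl
      · exact ⟨1, Or.inl (zpow_one x).symm⟩
      · exact ⟨0, Or.inr (by rw [zpow_zero, one_mul])⟩
    | one => exact ⟨0, Or.inl (zpow_zero a).symm⟩
    | mul x y _ _ ihx ihy =>
      obtain ⟨k, rfl | rfl⟩ := ihx <;> obtain ⟨l, rfl | rfl⟩ := ihy
      · exact ⟨k + l, Or.inl (zpow_add a k l).symm⟩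
      · exact ⟨k + l, Or.inr (by rw [← mul_assoc, ← zpow_add])⟩
      · exact ⟨k - l, Or.inr (by
          rw [mul_assoc, hzpow, ← mul_assoc, ← zpow_add, sub_eq_add_neg])⟩
      · exact ⟨k - l, Or.inl (by
          rw [mul_assoc, ← mul_assoc h, hzpow, mul_assoc, hh, mul_one, ← zpow_add,
            sub_eq_add_neg])⟩
    | inv x _ ih =>
      obtain ⟨k, rfl | rfl⟩ := ih
      · exact ⟨-k, Or.inl (zpow_neg a k).symm⟩
      · exact ⟨k, Or.inr (by rw [mul_inv_rev, hinv, ← zpow_neg, hzpow, neg_neg])⟩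
  · rintro ⟨k, rfl | rfl⟩
    · exact zpow_mem (subset_closure (by simp)) k
    · exact mul_mem (zpow_mem (subset_closure (by simp)) k) (subset_closure (by simp))

lemma zpow_mem_zpowers_sq_iff {G : Type*} [Group G] {s : G} (hs : Even (orderOf s)) (k : ℤ) :
    s ^ k ∈ zpowers (s ^ 2) ↔ 2 ∣ k := by
  constructor
  · rintro ⟨m, hm⟩
    have h1 : s ^ (k - 2 * m) = 1 := by
      rw [zpow_sub, zpow_mul, ← hm]
      simp
    have h2 : (2 : ℤ) ∣ orderOf s := by exact_mod_cast even_iff_two_dvd.1 hs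
    have := h2.trans (orderOf_dvd_iff_zpow_eq_one.2 h1)
    omega
  · rintro ⟨m, rfl⟩
    exact ⟨m, by simp [zpow_mul]⟩

section Rotations

open Matrix

abbrev M2 := Matrix (Fin 2) (Fin 2) ℝ

lemma adjugate_eq_det_smul_transpose (A : O2) :
    (A : M2).adjugate = (A : M2).det • (A : M2)ᵀ := by
  have hA : (A : M2)ᵀ * A = 1 := (mem_orthogonalGroup_iff' _ _).1 A.2
  calc (A : M2).adjugate = ((A : M2)ᵀ * A) * (A : M2).adjugate := by rw [hA, one_mul]
    _ = (A : M2).det • (A : M2)ᵀ := by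
      rw [Matrix.mul_assoc, mul_adjugate, Matrix.mul_smul, Matrix.mul_one]

lemma det_eq_neg_one_of_notMem_SO2 {A : O2} (hA : A ∉ SO2) : (A : M2).det = -1 := by
  have hA' : (A : M2) * (A : M2)ᵀ = 1 := (mem_orthogonalGroup_iff _ _).1 A.2
  have hdet : (A : M2).det * (A : M2).det = 1 := by
    simpa [det_transpose] using congrArg det hA'
  exact (mul_self_eq_one_iff.1 hdet).resolve_left hA

lemma exists_eq_rotation_matrix {A : O2} (hA : A ∈ SO2) :
    ∃ a b : ℝ, a ^ 2 + b ^ 2 = 1 ∧ (A : M2) = !![a, -b; b, a] := by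
  have hdet : (A : M2).det = 1 := hA
  have hadj := adjugate_eq_det_smul_transpose A
  rw [hdet, one_smul, adjugate_fin_two] at hadj
  have e11 : (A : M2) 1 1 = (A : M2) 0 0 := by simpa using congrFun (congrFun hadj 0) 0
  have e01 : (A : M2) 0 1 = -(A : M2) 1 0 := by
    simpa using (congrFun (congrFun hadj 1) 0).symm
  refine ⟨(A : M2) 0 0, (A : M2) 1 0, ?_, ?_⟩
  · rw [det_fin_two, e11, e01] at hdet; linear_combination hdet
  · rw [eta_fin_two (A : M2), e11, e01]; simp

lemma exists_eq_reflection_matrix {A : O2} (hA : A ∉ SO2) :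
    ∃ a b : ℝ, a ^ 2 + b ^ 2 = 1 ∧ (A : M2) = !![a, b; b, -a] := by
  have hdet := det_eq_neg_one_of_notMem_SO2 hA
  have hadj := adjugate_eq_det_smul_transpose A
  rw [hdet, neg_one_smul, adjugate_fin_two] at hadj
  have e11 : (A : M2) 1 1 = -(A : M2) 0 0 := by simpa using congrFun (congrFun hadj 0) 0
  have e01 : (A : M2) 0 1 = (A : M2) 1 0 := by
    simpa using (congrFun (congrFun hadj 1) 0).symm
  refine ⟨(A : M2) 0 0, (A : M2) 1 0, ?_, ?_⟩
  · rw [det_fin_two, e11, e01] at hdet; linear_combination -hdet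
  · rw [eta_fin_two (A : M2), e11, e01]; simp

lemma SO2_mul_comm {A B : O2} (hA : A ∈ SO2) (hB : B ∈ SO2) : A * B = B * A := by
  obtain ⟨a, b, -, hab⟩ := exists_eq_rotation_matrix hA
  obtain ⟨c, d, -, hcd⟩ := exists_eq_rotation_matrix hB
  apply Subtype.ext
  rw [UnitaryGroup.mul_val, UnitaryGroup.mul_val, hab, hcd, mul_fin_two, mul_fin_two]
  ring_nf

lemma reflection_mul_self {H : O2} (hH : H ∉ SO2) : H * H = 1 := by
  obtain ⟨a, b, hab, hH⟩ := exists_eq_reflection_matrix hH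
  apply Subtype.ext
  rw [UnitaryGroup.mul_val, UnitaryGroup.one_val, hH, mul_fin_two, one_fin_two]
  congr
  · linear_combination hab
  · ring
  · ring
  · linear_combination hab

-- `H * A` is again a reflection, hence an involution.
lemma reflection_mul_rotation {H A : O2} (hH : H ∉ SO2) (hA : A ∈ SO2) :
    H * A = A⁻¹ * H := by
  have hHA : H * A * (H * A) = 1 := reflection_mul_self ((mul_mem_cancel_right hA).not.2 hH)
  calc H * A = A⁻¹ * (H * H) * A * (H * A) := by rw [reflection_mul_self hH]; group
    _ = A⁻¹ * H * (H * A * (H * A)) := by group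
    _ = A⁻¹ * H := by rw [hHA, mul_one]

lemma mul_mem_SO2_of_notMem {A B : O2} (hA : A ∉ SO2) (hB : B ∉ SO2) : A * B ∈ SO2 := by
  change ((A * B : O2) : M2).det = 1
  rw [UnitaryGroup.mul_val, det_mul, det_eq_neg_one_of_notMem_SO2 hA,
    det_eq_neg_one_of_notMem_SO2 hB]
  norm_num

lemma eq_one_or_eq_neg_one_of_sq_eq_one {A : O2} (hA : A ∈ SO2) (hA2 : A ^ 2 = 1) :
    A = 1 ∨ (A : M2) = -1 := by
  obtain ⟨a, b, hab, hA⟩ := exists_eq_rotation_matrix hA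
  have hm := congrArg Subtype.val hA2
  rw [sq, UnitaryGroup.mul_val, UnitaryGroup.one_val, hA, mul_fin_two, one_fin_two] at hm
  simp only [EmbeddingLike.apply_eq_iff_eq, vecCons_inj, and_true] at hm
  obtain ⟨⟨h00, -⟩, -⟩ := hm
  have hb : b = 0 := pow_eq_zero_iff two_ne_zero |>.1 (by linear_combination (hab - h00) / 2)
  subst hb
  rcases mul_self_eq_one_iff.1 (by linear_combination h00 : a * a = 1) with rfl | rfl
  · left; apply Subtype.ext; rw [hA, UnitaryGroup.one_val, one_fin_two]; simp
  · right; rw [hA, one_fin_two]; simp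

lemma eq_one_or_eq_of_sq_eq_one {A B : O2} (hA : A ∈ SO2) (hB : B ∈ SO2) (hA2 : A ^ 2 = 1)
    (hB2 : B ^ 2 = 1) (hB1 : B ≠ 1) : A = 1 ∨ A = B := by
  have hB' := (eq_one_or_eq_neg_one_of_sq_eq_one hB hB2).resolve_left hB1
  exact (eq_one_or_eq_neg_one_of_sq_eq_one hA hA2).imp_right
    fun hA' => Subtype.ext (hA'.trans hB'.symm)

end Rotations

lemma mem_closure_rotation_reflection_iff {a h x : O2} (ha : a ∈ SO2) (hh : h ∉ SO2) :
    x ∈ Subgroup.closure {a, h} ↔ ∃ k : ℤ, x = a ^ k ∨ x = a ^ k * h :=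
  mem_closure_pair_iff_of_dihedral (reflection_mul_self hh) (reflection_mul_rotation hh ha)

lemma mem_zpowers_of_mem_closure_pair {a h x : O2} (ha : a ∈ SO2) (hh : h ∉ SO2)
    (hx : x ∈ Subgroup.closure {a, h}) (hxSO : x ∈ SO2) : x ∈ zpowers a := by
  obtain ⟨k, rfl | rfl⟩ := (mem_closure_rotation_reflection_iff ha hh).1 hx
  · exact zpow_mem_zpowers a k
  · exact absurd ((mul_mem_cancel_left (zpow_mem ha k)).1 hxSO) hh

lemma zpow_mem_closure_sq_iff {s h : O2} (hs : s ∈ SO2) (hh : h ∉ SO2) (he : Even (orderOf s))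
    (k : ℤ) : s ^ k ∈ Subgroup.closure {s ^ 2, h} ↔ 2 ∣ k := by
  rw [← zpow_mem_zpowers_sq_iff he]
  refine ⟨fun hk => mem_zpowers_of_mem_closure_pair (pow_mem hs 2) hh hk (zpow_mem hs k),
    fun hk => zpowers_le.2 (subset_closure (by simp)) hk⟩

lemma index_closure_sq_subgroupOf {s h : O2} (hs : s ∈ SO2) (hh : h ∉ SO2)
    (he : Even (orderOf s)) :
    ((Subgroup.closure {s ^ 2, h}).subgroupOf (Subgroup.closure {s, h})).index = 2 := by
  have hhD : h ∈ Subgroup.closure {s ^ 2, h} := subset_closure (by simp)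
  rw [index_eq_two_iff]
  refine ⟨⟨s, subset_closure (by simp)⟩, fun x => ?_⟩
  simp only [mem_subgroupOf, Subgroup.coe_mul]
  obtain ⟨k, hx | hx⟩ := (mem_closure_rotation_reflection_iff hs hh).1 x.2
  · rw [hx, ← zpow_add_one, zpow_mem_closure_sq_iff hs hh he, zpow_mem_closure_sq_iff hs hh he]
    unfold Xor; omega
  · rw [hx, mul_assoc, reflection_mul_rotation hh hs, ← mul_assoc, ← zpow_sub_one,
      mul_mem_cancel_right hhD, mul_mem_cancel_right hhD, zpow_mem_closure_sq_iff hs hh he,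
      zpow_mem_closure_sq_iff hs hh he]
    unfold Xor; omega

lemma closure_pair_le_normalizer_closure_sq {s h : O2} (hs : s ∈ SO2) (hh : h ∉ SO2)
    (he : Even (orderOf s)) :
    Subgroup.closure {s, h} ≤ normalizer (Subgroup.closure {s ^ 2, h} : Set O2) := by
  have := normal_of_index_eq_two (index_closure_sq_subgroupOf hs hh he)
  refine le_normalizer_of_normal_subgroupOf ((closure_le _).2 ?_)
  rintro x (rfl | rfl)
  · exact pow_mem (subset_closure (by simp)) 2
  · exact subset_closure (by simp)

lemma mem_zpowers_of_sq_mem_zpowers_sq {g s : O2} {n : ℕ} (hg : g ∈ SO2) (hs : s ∈ SO2)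
    (hos : orderOf s = 2 * n) (hn : n ≠ 0) (hg2 : g ^ 2 ∈ zpowers (s ^ 2)) :
    g ∈ zpowers s := by
  obtain ⟨m, hm⟩ := mem_zpowers_iff.1 hg2
  have ht : (g * s ^ (-m)) ^ 2 = 1 := by
    rw [Commute.mul_pow (SO2_mul_comm hg (zpow_mem hs (-m))), ← hm]
    group
  have hsn : (s ^ n) ^ 2 = 1 := by rw [← pow_mul, mul_comm, ← hos, pow_orderOf_eq_one]
  have hsn1 : s ^ n ≠ 1 := pow_ne_one_of_lt_orderOf hn (by omega)
  have hgt : g = g * s ^ (-m) * s ^ m := by group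
  rw [hgt]
  refine mul_mem ?_ (zpow_mem_zpowers s m)
  rcases eq_one_or_eq_of_sq_eq_one (mul_mem hg (zpow_mem hs (-m))) (pow_mem hs n) ht hsn hsn1
    with h1 | hsn'
  · rw [h1]; exact one_mem _
  · rw [hsn']; exact npow_mem_zpowers s n

lemma mem_zpowers_of_mem_normalizer_closure_sq {g s h : O2} {n : ℕ} (hg : g ∈ SO2)
    (hs : s ∈ SO2) (hh : h ∉ SO2) (hos : orderOf s = 2 * n) (hn : n ≠ 0)
    (hgN : g ∈ normalizer (Subgroup.closure {s ^ 2, h} : Set O2)) : g ∈ zpowers s := by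
  have hhD : h ∈ Subgroup.closure {s ^ 2, h} := subset_closure (by simp)
  have hconj : g * h * g⁻¹ = g ^ 2 * h := by
    rw [mul_assoc, reflection_mul_rotation hh (inv_mem hg), inv_inv, ← mul_assoc, sq]
  have hg2 : g ^ 2 ∈ Subgroup.closure {s ^ 2, h} := by
    rw [← mul_mem_cancel_right hhD, ← hconj]
    exact (mem_normalizer_iff.1 hgN h).1 hhD
  exact mem_zpowers_of_sq_mem_zpowers_sq hg hs hos hn
    (mem_zpowers_of_mem_closure_pair (pow_mem hs 2) hh hg2 (pow_mem hg 2))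

lemma normalizer_closure_sq_le_closure_pair {s h : O2} {n : ℕ} (hs : s ∈ SO2) (hh : h ∉ SO2)
    (hos : orderOf s = 2 * n) (hn : n ≠ 0) :
    normalizer (Subgroup.closure {s ^ 2, h} : Set O2) ≤ Subgroup.closure {s, h} := by
  have hrot : ∀ g ∈ normalizer (Subgroup.closure {s ^ 2, h} : Set O2), g ∈ SO2 →
      g ∈ Subgroup.closure {s, h} := fun g hgN hg =>
    zpowers_le.2 (subset_closure (by simp))
      (mem_zpowers_of_mem_normalizer_closure_sq hg hs hh hos hn hgN)
  intro g hgN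
  by_cases hg : g ∈ SO2
  · exact hrot g hgN hg
  · have hhN : h ∈ normalizer (Subgroup.closure {s ^ 2, h} : Set O2) :=
      le_normalizer (subset_closure (by simp))
    have hghN := hrot (g * h) (mul_mem hgN hhN) (mul_mem_SO2_of_notMem hg hh)
    exact (mul_mem_cancel_right (subset_closure (by simp))).1 hghN

theorem statement0_general (n : ℕ) (hn : 1 ≤ n) (h r s : O2)
    (hh : h ∉ SO2) (hs : s ∈ SO2)
    (hos : orderOf s = 2 * n) (hsr : s ^ 2 = r) :
    (Subgroup.normalizer (Subgroup.closure {r, h} : Set O2)) = Subgroup.closure {s, h} ∧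
      Nat.card
        (↥(Subgroup.normalizer (Subgroup.closure {r, h} : Set O2)) ⧸
          (Subgroup.closure {r, h}).subgroupOf (Subgroup.normalizer (Subgroup.closure {r, h} : Set O2))) = 2 := by
  subst hsr
  have he : Even (orderOf s) := hos ▸ even_two_mul n
  have hN : normalizer (Subgroup.closure {s ^ 2, h} : Set O2) = Subgroup.closure {s, h} :=
    le_antisymm (normalizer_closure_sq_le_closure_pair hs hh hos (by omega))
      (closure_pair_le_normalizer_closure_sq hs hh he)
  refine ⟨hN, ?_⟩
  rw [hN, ← index_eq_card]
  exact index_closure_sq_subgroupOf hs hh he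

/-- if `r` is a rotation of order `n`, `h` a reflection (an element of
`O(2) \ SO(2)`), so that `D := ⟨r, h⟩` is the dihedral subgroup `D_{2n}^h` of order `2n`,
and `s` is a rotation of order `2n` with `s ^ 2 = r` (so that `⟨s, h⟩` is the dihedral
subgroup `D_{4n}^h` of order `4n`), then the normaliser of `D_{2n}^h` in `O(2)` is
`D_{4n}^h`, and the Weyl group `N_{O(2)}(D_{2n}^h) / D_{2n}^h` has order `2`. -/
theorem statement0 (n : ℕ) (hn : 1 ≤ n) (h r s : O2)
    (hh : h ∉ SO2) (hr : r ∈ SO2) (hs : s ∈ SO2)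
    (hor : orderOf r = n) (hos : orderOf s = 2 * n) (hsr : s ^ 2 = r) :
    (Subgroup.normalizer (Subgroup.closure {r, h} : Set O2)) = Subgroup.closure {s, h} ∧
      Nat.card
        (↥(Subgroup.normalizer (Subgroup.closure {r, h} : Set O2)) ⧸
          (Subgroup.closure {r, h}).subgroupOf (Subgroup.normalizer (Subgroup.closure {r, h} : Set O2))) = 2 :=
  statement0_general n hn h r s hh hs hos hsr
end

section
/- The functor ⊞_1 : A → ℚ[ℤ/2]-Mod, sending V to the pullback of V_∞ → colim_n ∏_{k≥n} V_k ← ∏_{k≥1} V_k, preserves filtered colimits. -/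
/-!
Colimits in `𝒜` are computed stalkwise, so over a filtered diagram every element of a stalk of
the colimit comes from a finite stage, and every relation between such elements holds at a
finite stage. An element `(v, x)` of `⊞_1` of the colimit involves infinitely many stalks at
once; the compatibility `σ v = [x]` brings it back to finitely many. Lifting `v` to `v₀` at
some stage and representing `σ v₀` by a sequence `y`, the sequence `x` agrees with the image of
`y` in all but finitely many coordinates, and these are lifted to a common later stage.
Likewise an element of `⊞_1` at some stage that vanishes in the colimit vanishes at a later
stage: once its component at `∞` is zero its sequence is eventually zero, and the finitely many
remaining coordinates die at a common later stage.
-/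

open scoped TensorProduct

universe u

variable {V W U : ℕ → Type u}
  [∀ k, AddCommGroup (V k)] [∀ k, Module ℚ (V k)]
  [∀ k, AddCommGroup (W k)] [∀ k, Module ℚ (W k)]
  [∀ k, AddCommGroup (U k)] [∀ k, Module ℚ (U k)]

/-- The submodule of eventually-zero sequences in `∏ k, V k`. -/
def evZero (V : ℕ → Type u) [∀ k, AddCommGroup (V k)] [∀ k, Module ℚ (V k)] :
    Submodule ℚ (∀ k, V k) where
  carrier := {x | ∃ N, ∀ k, N ≤ k → x k = 0}
  add_mem' := by
    rintro x y ⟨N, hN⟩ ⟨M, hM⟩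
    exact ⟨max N M, fun k hk => by
      simp [hN k (le_trans (le_max_left _ _) hk), hM k (le_trans (le_max_right _ _) hk)]⟩
  zero_mem' := ⟨0, fun k _ => rfl⟩
  smul_mem' := by
    rintro c x ⟨N, hN⟩
    exact ⟨N, fun k hk => by simp [hN k hk]⟩

/-- `colim_n ∏_{k ≥ n} V_k`, realised concretely as the quotient of `∏ k, V k` by the
submodule of eventually-zero sequences. -/
def VEnd (V : ℕ → Type u) [∀ k, AddCommGroup (V k)] [∀ k, Module ℚ (V k)] : Type u :=
  (∀ k, V k) ⧸ evZero V

instance : AddCommGroup (VEnd V) := by unfold VEnd; infer_instance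
instance : Module ℚ (VEnd V) := by unfold VEnd; infer_instance

/-- The class of a sequence in `VEnd V`. -/
def VEnd.mk : (∀ k, V k) →ₗ[ℚ] VEnd V := (evZero V).mkQ

/-- The map induced on `VEnd` by a family of linear maps. -/
def endMap (f : ∀ k, V k →ₗ[ℚ] W k) : VEnd V →ₗ[ℚ] VEnd W :=
  Submodule.mapQ _ _ (LinearMap.pi fun k => (f k).comp (LinearMap.proj k))
    (by rintro x ⟨N, hN⟩; exact ⟨N, fun k hk => by simp [LinearMap.pi, hN k hk]⟩)

@[simp] lemma endMap_mk (f : ∀ k, V k →ₗ[ℚ] W k) (x : ∀ k, V k) :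
    endMap f (VEnd.mk x) = VEnd.mk (fun k => f k (x k)) := rfl

@[simp] lemma endMap_id : endMap (fun k => (LinearMap.id : V k →ₗ[ℚ] V k)) = LinearMap.id := by
  refine Submodule.linearMap_qext _ ?_
  ext x
  rfl

lemma endMap_comp (f : ∀ k, V k →ₗ[ℚ] W k) (g : ∀ k, W k →ₗ[ℚ] U k) :
    endMap (fun k => (g k).comp (f k)) = (endMap g).comp (endMap f) := by
  refine Submodule.linearMap_qext _ ?_
  ext x
  rfl

lemma endMap_add (f g : ∀ k, V k →ₗ[ℚ] W k) :
    endMap (fun k => f k + g k) = endMap f + endMap g := by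
  refine Submodule.linearMap_qext _ ?_
  ext x
  show endMap _ (VEnd.mk x) = endMap f (VEnd.mk x) + endMap g (VEnd.mk x)
  simp only [endMap_mk]
  rw [← map_add]
  rfl

lemma endMap_smul (c : ℚ) (f : ∀ k, V k →ₗ[ℚ] W k) :
    endMap (fun k => c • f k) = c • endMap f := by
  refine Submodule.linearMap_qext _ ?_
  ext x
  show endMap _ (VEnd.mk x) = c • endMap f (VEnd.mk x)
  simp only [endMap_mk]
  rw [← map_smul]
  rfl

lemma endMap_zero : endMap (fun k => (0 : V k →ₗ[ℚ] W k)) = 0 := by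
  refine Submodule.linearMap_qext _ ?_
  ext x
  show endMap _ (VEnd.mk x) = 0
  simp only [endMap_mk]
  show VEnd.mk (fun _ => 0) = 0
  rw [← map_zero (VEnd.mk (V := W))]
  rfl

/-- An object of the algebraic model `𝒜(𝒟)` (in the ungraded setting): a rational vector
space `Vinf` (the stalk at `∞`, with trivial `ℤ/2`-action), rational vector spaces `V k`
with a `ℤ/2`-action (given by the involution `w k`) for each `k`, and an equivariant
linear structure map `sig : Vinf → colim_n ∏_{k ≥ n} V k`. -/
structure AObj : Type (u + 1) where
  Vinf : Type u
  [addInf : AddCommGroup Vinf]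
  [modInf : Module ℚ Vinf]
  V : ℕ → Type u
  [addV : ∀ k, AddCommGroup (V k)]
  [modV : ∀ k, Module ℚ (V k)]
  w : ∀ k, V k →ₗ[ℚ] V k
  w_sq : ∀ k, (w k).comp (w k) = LinearMap.id
  sig : Vinf →ₗ[ℚ] VEnd V
  sig_w : (endMap w).comp sig = sig

attribute [instance] AObj.addInf AObj.modInf AObj.addV AObj.modV

/-- A morphism in the algebraic model: a linear map at `∞` and `ℤ/2`-equivariant linear
maps at each `k`, compatible with the structure maps. -/
@[ext] structure AHom (A B : AObj.{u}) : Type u where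
  finf : A.Vinf →ₗ[ℚ] B.Vinf
  f : ∀ k, A.V k →ₗ[ℚ] B.V k
  equivar : ∀ k, (f k).comp (A.w k) = (B.w k).comp (f k)
  comm : (endMap f).comp A.sig = B.sig.comp finf

open CategoryTheory

instance : Category AObj.{u} where
  Hom := AHom
  id A := ⟨LinearMap.id, fun _ => LinearMap.id, fun k => by simp, by simp⟩
  comp {A B C} f g :=
    ⟨g.finf.comp f.finf, fun k => (g.f k).comp (f.f k),
      fun k => by
        rw [LinearMap.comp_assoc, f.equivar k, ← LinearMap.comp_assoc, g.equivar k,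
          LinearMap.comp_assoc],
      by
        rw [endMap_comp, LinearMap.comp_assoc, f.comm, ← LinearMap.comp_assoc, g.comm,
          LinearMap.comp_assoc]⟩
  id_comp f := by apply AHom.ext <;> rfl
  comp_id f := by apply AHom.ext <;> rfl
  assoc f g h := by apply AHom.ext <;> rfl

@[simp] lemma AHom_id_f (A : AObj) (k : ℕ) : AHom.f (𝟙 A) k = LinearMap.id := rfl
@[simp] lemma AHom_id_finf (A : AObj) : AHom.finf (𝟙 A) = LinearMap.id := rfl
@[simp] lemma AHom_comp_f {A B C : AObj} (f : A ⟶ B) (g : B ⟶ C) (k : ℕ) :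
    AHom.f (f ≫ g) k = (g.f k).comp (f.f k) := rfl
@[simp] lemma AHom_comp_finf {A B C : AObj} (f : A ⟶ B) (g : B ⟶ C) :
    AHom.finf (f ≫ g) = g.finf.comp f.finf := rfl

/-- Addition of morphisms (the hom-sets of `𝒜(𝒟)` are `ℚ`-vector spaces). -/
instance (A B : AObj) : Add (AHom A B) :=
  ⟨fun f g =>
    ⟨f.finf + g.finf, fun k => f.f k + g.f k,
      fun k => by
        rw [LinearMap.add_comp, LinearMap.comp_add, f.equivar k, g.equivar k],
      by rw [endMap_add, LinearMap.add_comp, LinearMap.comp_add, f.comm, g.comm]⟩⟩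

instance (A B : AObj) : Zero (AHom A B) :=
  ⟨⟨0, fun _ => 0, fun k => by simp, by rw [endMap_zero]; simp⟩⟩

instance (A B : AObj) : SMul ℚ (AHom A B) :=
  ⟨fun c f =>
    ⟨c • f.finf, fun k => c • f.f k,
      fun k => by rw [LinearMap.smul_comp, LinearMap.comp_smul, f.equivar k],
      by rw [endMap_smul, LinearMap.smul_comp, LinearMap.comp_smul, f.comm]⟩⟩

open CategoryTheory Limits

/-- The stalk functor `p_k : 𝒜(𝒟) → ℚ-Mod` (forgetting the `ℤ/2`-action). -/
@[simps] def pkFun (k : ℕ) : AObj.{u} ⥤ ModuleCat.{u} ℚ where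
  obj A := ModuleCat.of ℚ (A.V k)
  map φ := ModuleCat.ofHom (φ.f k)

/-- The stalk-at-`∞` functor `p_∞ : 𝒜(𝒟) → ℚ-Mod`. -/
@[simps] def pinfFun : AObj.{u} ⥤ ModuleCat.{u} ℚ where
  obj A := ModuleCat.of ℚ A.Vinf
  map φ := ModuleCat.ofHom φ.finf

/-- The constant object `cM`: all stalks equal to `M` with trivial `ℤ/2`-action, and
structure map induced by the diagonal `M → ∏_k M`. -/
def cObj (M : Type u) [AddCommGroup M] [Module ℚ M] : AObj.{u} where
  Vinf := M
  V _ := M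
  w _ := LinearMap.id
  w_sq _ := by simp
  sig := VEnd.mk.comp (LinearMap.pi fun _ => LinearMap.id)
  sig_w := by rw [endMap_id]; simp

/-- `⊞_N V`, the pullback of `V_∞ → colim_n ∏_{k ≥ n} V_k ← ∏_{k ≥ N} V_k`, realised as
the submodule of `V_∞ × ∏_k V_k` of pairs `(v, x)` with `σ(v) = [x]` and `x k = 0` for
`k < N`.  (Stalks are indexed by `ℕ` starting at `0`, so the paper's `⊞_1` is `BoxPlus 0`
and the paper's `⊞_N` is `BoxPlus (N-1)`.) -/
def BoxPlus (N : ℕ) (A : AObj.{u}) : Submodule ℚ (A.Vinf × ∀ k, A.V k) where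
  carrier := {p | A.sig p.1 = VEnd.mk p.2 ∧ ∀ k < N, p.2 k = 0}
  add_mem' := by
    rintro p q ⟨hp, hp'⟩ ⟨hq, hq'⟩
    refine ⟨?_, fun k hk => by simp [hp' k hk, hq' k hk]⟩
    show A.sig (p.1 + q.1) = VEnd.mk (p.2 + q.2)
    rw [map_add, map_add, hp, hq]
  zero_mem' := by
    refine ⟨?_, fun k _ => rfl⟩
    show A.sig 0 = VEnd.mk 0
    simp
  smul_mem' := by
    rintro c p ⟨hp, hp'⟩
    refine ⟨?_, fun k hk => by simp [hp' k hk]⟩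
    show A.sig (c • p.1) = VEnd.mk (c • p.2)
    rw [map_smul, map_smul, hp]

/-- The ambient linear map underlying the induced map `⊞_N A → ⊞_N B` of a morphism. -/
def boxAmbient {A B : AObj.{u}} (φ : A ⟶ B) :
    (A.Vinf × ∀ k, A.V k) →ₗ[ℚ] (B.Vinf × ∀ k, B.V k) :=
  LinearMap.prodMap φ.finf (LinearMap.pi fun k => (φ.f k).comp (LinearMap.proj k))

lemma boxAmbient_mem {A B : AObj.{u}} (φ : A ⟶ B) (N : ℕ) {p : A.Vinf × ∀ k, A.V k}
    (hp : p ∈ BoxPlus N A) : boxAmbient φ p ∈ BoxPlus N B := by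
  obtain ⟨h1, h2⟩ := hp
  constructor
  · show B.sig (φ.finf p.1) = VEnd.mk fun k => φ.f k (p.2 k)
    have := congrArg (fun g => g p.1) φ.comm.symm
    simp only [LinearMap.comp_apply] at this
    rw [this, h1, endMap_mk]
  · intro k hk
    show φ.f k (p.2 k) = 0
    rw [h2 k hk, map_zero]

/-- The induced map `⊞_N A → ⊞_N B` of a morphism of `𝒜(𝒟)`. -/
def boxMap {A B : AObj.{u}} (φ : A ⟶ B) (N : ℕ) : BoxPlus N A →ₗ[ℚ] BoxPlus N B :=
  (boxAmbient φ).restrict fun _ hp => boxAmbient_mem φ N hp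

/-- The involution (`ℤ/2`-action) on `⊞_N A`. -/
def wBox (A : AObj.{u}) (N : ℕ) : BoxPlus N A →ₗ[ℚ] BoxPlus N A :=
  boxMap (show A ⟶ A from
    ⟨LinearMap.id, A.w, fun k => rfl, by
      rw [A.sig_w]; rfl⟩) N

/-- The `⊞_1 = BoxPlus 0` functor `𝒜(𝒟) → ℚ-Mod`. -/
@[simps] def box0Fun : AObj.{u} ⥤ ModuleCat.{u} ℚ where
  obj A := ModuleCat.of ℚ (BoxPlus 0 A)
  map φ := ModuleCat.ofHom (boxMap φ 0)
  map_id A := by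
    refine ModuleCat.hom_ext (LinearMap.ext fun p => ?_)
    apply Subtype.ext
    rfl
  map_comp f g := by
    refine ModuleCat.hom_ext (LinearMap.ext fun p => ?_)
    apply Subtype.ext
    rfl

/-- The submodule of `(v, x)` with all `x k` fixed by the involutions. -/
def fixCond (A : AObj.{u}) : Submodule ℚ (A.Vinf × ∀ k, A.V k) where
  carrier := {p | ∀ k, A.w k (p.2 k) = p.2 k}
  add_mem' := by
    intro p q hp hq k
    show A.w k (p.2 k + q.2 k) = _
    rw [map_add, hp k, hq k]
    rfl
  zero_mem' := by
    intro k
    show A.w k 0 = 0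
    simp
  smul_mem' := by
    intro c p hp k
    show A.w k (c • p.2 k) = _
    rw [map_smul, hp k]
    rfl

/-- `(⊞_N V)^{ℤ/2}`, the `ℤ/2`-fixed points of `⊞_N V`. -/
def BoxW (N : ℕ) (A : AObj.{u}) : Submodule ℚ (A.Vinf × ∀ k, A.V k) :=
  BoxPlus N A ⊓ fixCond A

lemma boxAmbient_memW {A B : AObj.{u}} (φ : A ⟶ B) (N : ℕ) {p : A.Vinf × ∀ k, A.V k}
    (hp : p ∈ BoxW N A) : boxAmbient φ p ∈ BoxW N B := by
  refine ⟨boxAmbient_mem φ N hp.1, fun k => ?_⟩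
  show B.w k (φ.f k (p.2 k)) = φ.f k (p.2 k)
  have := congrArg (fun g => g (p.2 k)) (φ.equivar k)
  simp only [LinearMap.comp_apply] at this
  rw [← this, hp.2 k]

/-- The map induced on `ℤ/2`-fixed points of `⊞_N`. -/
def boxWMap {A B : AObj.{u}} (φ : A ⟶ B) (N : ℕ) : BoxW N A →ₗ[ℚ] BoxW N B :=
  (boxAmbient φ).restrict fun _ hp => boxAmbient_memW φ N hp

/-- The functor `V ↦ (⊞_N V)^{ℤ/2}` from `𝒜(𝒟)` to `ℚ`-modules. -/
@[simps] def boxWFun (N : ℕ) : AObj.{u} ⥤ ModuleCat.{u} ℚ where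
  obj A := ModuleCat.of ℚ (BoxW N A)
  map φ := ModuleCat.ofHom (boxWMap φ N)
  map_id A := by
    refine ModuleCat.hom_ext (LinearMap.ext fun p => ?_)
    apply Subtype.ext
    rfl
  map_comp f g := by
    refine ModuleCat.hom_ext (LinearMap.ext fun p => ?_)
    apply Subtype.ext
    rfl

/-- The ambient map `(v, x) ↦ (v, x with coordinate N zeroed out)`. -/
def zeroAmbient (A : AObj.{u}) (N : ℕ) :
    (A.Vinf × ∀ k, A.V k) →ₗ[ℚ] (A.Vinf × ∀ k, A.V k) :=
  LinearMap.prodMap LinearMap.id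
    (LinearMap.pi fun k => if k = N then 0 else LinearMap.proj k)

lemma zeroAmbient_mem (A : AObj.{u}) (N : ℕ) {p : A.Vinf × ∀ k, A.V k}
    (hp : p ∈ BoxW N A) : zeroAmbient A N p ∈ BoxW (N + 1) A := by
  obtain ⟨⟨h1, h2⟩, h3⟩ := hp
  have hx : (zeroAmbient A N p).2 = fun k => if k = N then 0 else p.2 k := by
    funext k
    show (if k = N then (0 : (∀ j, A.V j) →ₗ[ℚ] A.V k) else LinearMap.proj k) p.2 = _
    split_ifs <;> rfl
  refine ⟨⟨?_, ?_⟩, ?_⟩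
  · show A.sig p.1 = VEnd.mk (zeroAmbient A N p).2
    rw [h1, hx]
    show Submodule.Quotient.mk _ = Submodule.Quotient.mk _
    rw [Submodule.Quotient.eq]
    exact ⟨N + 1, fun k hk => by
      have : k ≠ N := by omega
      simp [this]⟩
  · intro k hk
    rw [hx]
    by_cases h : k = N
    · simp [h]
    · have : k < N := by omega
      simp [h, h2 k this]
  · intro k
    rw [hx]
    by_cases h : k = N
    · simp [h]
    · simpa [h] using h3 k

/-- The natural transformation `(⊞_N)^{ℤ/2} ⟶ (⊞_{N+1})^{ℤ/2}` which zeroes out the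
coordinate `N`. -/
@[simps] def zeroNatTrans (N : ℕ) : boxWFun.{u} N ⟶ boxWFun.{u} (N + 1) where
  app A := ModuleCat.ofHom ((zeroAmbient A N).restrict fun _ hp => zeroAmbient_mem A N hp)
  naturality A B φ := by
    refine ModuleCat.hom_ext (LinearMap.ext fun p => ?_)
    obtain ⟨⟨v, x⟩, hp⟩ := p
    apply Subtype.ext
    apply Prod.ext
    · rfl
    · funext k
      show (if k = N then (0 : (∀ j, B.V j) →ₗ[ℚ] B.V k) else LinearMap.proj k)
          (fun j => φ.f j (x j)) =
        φ.f k ((if k = N then (0 : (∀ j, A.V j) →ₗ[ℚ] A.V k) else LinearMap.proj k) x)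
      split_ifs <;> simp

namespace CategoryTheory.IsFiltered

variable {C : Type*} [Category C] [IsFilteredOrEmpty C]

theorem exists_hom_forall_lt {i : C} (P : ℕ → ∀ ⦃j : C⦄, (i ⟶ j) → Prop)
    (mono : ∀ k ⦃j j' : C⦄ (f : i ⟶ j) (g : j ⟶ j'), P k f → P k (f ≫ g))
    (eventually : ∀ k, ∃ (j : C) (f : i ⟶ j), P k f) (N : ℕ) :
    ∃ (j : C) (f : i ⟶ j), ∀ k < N, P k f := by
  induction N with
  | zero => exact ⟨i, 𝟙 i, by simp⟩
  | succ N ih =>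
    obtain ⟨j₁, f₁, hf₁⟩ := ih
    obtain ⟨j₂, f₂, hf₂⟩ := eventually N
    obtain ⟨j, g₁, g₂, hg⟩ := span f₁ f₂
    refine ⟨j, f₁ ≫ g₁, fun k hk => ?_⟩
    rcases Nat.lt_succ_iff_lt_or_eq.mp hk with hk | rfl
    · exact mono k f₁ g₁ (hf₁ k hk)
    · exact hg ▸ mono k f₂ g₂ hf₂

end CategoryTheory.IsFiltered

namespace ModuleCat

universe w

variable {R : Type w} [Ring R]

lemma linearMap_ext_of_colimit {J : Type*} [Category J]
    {G : J ⥤ ModuleCat.{u} R} [HasColimit G] {M : Type u} [AddCommGroup M] [Module R M]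
    {a b : ↥(colimit G) →ₗ[R] M} (h : ∀ j x, a (colimit.ι G j x) = b (colimit.ι G j x)) :
    a = b :=
  ModuleCat.hom_ext_iff.mp <| colimit.hom_ext (X := ModuleCat.of R M)
    (f := ModuleCat.ofHom a) (f' := ModuleCat.ofHom b)
    fun j => ModuleCat.hom_ext (LinearMap.ext (h j))

/- The library has the next three instances only for `ModuleCat.{u} R` with `R : Type u`,
whereas here `ℚ : Type` and the modules live in `Type u`. -/
instance forget₂_preservesFilteredColimitsOfSize :
    PreservesFilteredColimitsOfSize.{u, u}
      (forget₂ (ModuleCat.{max u w} R) AddCommGrpCat.{max u w}) where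
  preserves_filtered_colimits _ _ _ := ⟨fun {G} => preservesColimit_of_preserves_colimit_cocone
    (FilteredColimits.colimitCoconeIsColimit G)
    (AddCommGrpCat.FilteredColimits.colimitCoconeIsColimit (G ⋙ forget₂ _ AddCommGrpCat))⟩

instance forget_preservesFilteredColimitsOfSize :
    PreservesFilteredColimitsOfSize.{u, u} (forget (ModuleCat.{max u w} R)) :=
  have : PreservesFilteredColimitsOfSize.{u, u} (forget AddCommGrpCat.{max u w}) :=
    preservesFilteredColimitsOfSize_of_univLE.{max u w, max u w, u, u} _
  comp_preservesFilteredColimits (forget₂ _ AddCommGrpCat) (forget AddCommGrpCat)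

instance forget_reflectsFilteredColimitsOfSize :
    ReflectsFilteredColimitsOfSize.{u, u} (forget (ModuleCat.{max u w} R)) where
  reflects_filtered_colimits _ := ⟨reflectsColimit_of_reflectsIsomorphisms _ _⟩

theorem exists_map_eq_zero_of_isColimit {J : Type u} [SmallCategory J] [IsFiltered J]
    {G : J ⥤ ModuleCat.{max u w} R} {D : Cocone G} (hD : IsColimit D) {j : J} {x : G.obj j}
    (hx : D.ι.app j x = 0) : ∃ (j' : J) (g : j ⟶ j'), G.map g x = 0 := by
  obtain ⟨j', f, g, h⟩ :=
    Concrete.isColimit_exists_of_rep_eq G hD x 0 (hx.trans (map_zero _).symm)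
  exact ⟨j', f, h.trans (map_zero _)⟩

end ModuleCat

lemma VEnd.mk_surjective : Function.Surjective (VEnd.mk : (∀ k, V k) → VEnd V) :=
  Submodule.mkQ_surjective _

lemma VEnd.mk_eq_mk_iff {x y : ∀ k, V k} :
    VEnd.mk x = VEnd.mk y ↔ ∃ N, ∀ k, N ≤ k → x k = y k :=
  (Submodule.Quotient.eq _).trans <| exists_congr fun _ => forall₂_congr fun _ _ => sub_eq_zero

lemma VEnd.mk_eq_zero_iff {x : ∀ k, V k} :
    VEnd.mk x = 0 ↔ ∃ N, ∀ k, N ≤ k → x k = 0 :=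
  Submodule.Quotient.mk_eq_zero _

namespace AObj

variable (A : AObj.{u})

@[simp] lemma w_w_apply (k : ℕ) (v : A.V k) : A.w k (A.w k v) = v :=
  LinearMap.congr_fun (A.w_sq k) v

lemma sig_eq_mk_w {v : A.Vinf} {y : ∀ k, A.V k} (h : A.sig v = VEnd.mk y) :
    A.sig v = VEnd.mk fun k => A.w k (y k) := by
  rw [← endMap_mk, ← h, ← LinearMap.comp_apply, A.sig_w]

end AObj

namespace AHom

variable {A B : AObj.{u}} (φ : A ⟶ B)

lemma f_w_apply (k : ℕ) (v : A.V k) : φ.f k (A.w k v) = B.w k (φ.f k v) :=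
  LinearMap.congr_fun (φ.equivar k) v

lemma sig_finf_apply (v : A.Vinf) : B.sig (φ.finf v) = endMap φ.f (A.sig v) :=
  (LinearMap.congr_fun φ.comm v).symm

lemma sig_finf_eq_mk {v : A.Vinf} {y : ∀ k, A.V k} (h : A.sig v = VEnd.mk y) :
    B.sig (φ.finf v) = VEnd.mk fun k => φ.f k (y k) := by
  rw [sig_finf_apply, h, endMap_mk]

end AHom

noncomputable section

namespace AObj

variable {J : Type u} [SmallCategory J] (F : J ⥤ AObj.{u})

def stalkInvolution (k : ℕ) : F ⋙ pkFun k ⟶ F ⋙ pkFun k where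
  app j := ModuleCat.ofHom ((F.obj j).w k)
  naturality _ _ φ := ModuleCat.hom_ext ((F.map φ).equivar k).symm

def stalkwiseSigCocone : Cocone (F ⋙ pinfFun) where
  pt := ModuleCat.of ℚ (VEnd fun k => ↥(colimit (F ⋙ pkFun k)))
  ι.app j := ModuleCat.ofHom
    ((endMap fun k => (colimit.ι (F ⋙ pkFun k) j).hom) ∘ₗ (F.obj j).sig)
  ι.naturality j j' φ := ModuleCat.hom_ext <| LinearMap.ext fun v => by
    obtain ⟨y, hy⟩ := VEnd.mk_surjective ((F.obj j).sig v)
    change endMap _ ((F.obj j').sig ((F.map φ).finf v)) = endMap _ ((F.obj j).sig v)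
    rw [(F.map φ).sig_finf_eq_mk hy.symm, ← hy]
    exact congrArg VEnd.mk (funext fun k => colimit.w_apply (F ⋙ pkFun k) φ (y k))

def stalkwiseSig :
    ↥(colimit (F ⋙ pinfFun)) →ₗ[ℚ] VEnd fun k => ↥(colimit (F ⋙ pkFun k)) :=
  (colimit.desc _ (stalkwiseSigCocone F)).hom

lemma stalkwiseSig_ι_of_eq_mk {j : J} {v : (F.obj j).Vinf} {y : ∀ k, (F.obj j).V k}
    (h : (F.obj j).sig v = VEnd.mk y) :
    stalkwiseSig F (colimit.ι (F ⋙ pinfFun) j v) =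
      VEnd.mk fun k => colimit.ι (F ⋙ pkFun k) j (y k) :=
  (colimit.ι_desc_apply (stalkwiseSigCocone F) j v).trans (congrArg (endMap _) h)

lemma colimMap_stalkInvolution_ι (k : ℕ) (j : J) (v : (F.obj j).V k) :
    colimMap (stalkInvolution F k) (colimit.ι (F ⋙ pkFun k) j v) =
      colimit.ι (F ⋙ pkFun k) j ((F.obj j).w k v) :=
  colimit.ι_map_apply (stalkInvolution F k) j v

def stalkwiseColimit : AObj.{u} where
  Vinf := ↥(colimit (F ⋙ pinfFun))
  V k := ↥(colimit (F ⋙ pkFun k))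
  w k := (colimMap (stalkInvolution F k)).hom
  w_sq k := ModuleCat.linearMap_ext_of_colimit fun j v =>
    (congrArg _ (colimMap_stalkInvolution_ι F k j v)).trans <|
      (colimMap_stalkInvolution_ι F k j _).trans (congrArg _ ((F.obj j).w_w_apply k v))
  sig := stalkwiseSig F
  sig_w := ModuleCat.linearMap_ext_of_colimit fun j v => by
    obtain ⟨y, hy⟩ := VEnd.mk_surjective ((F.obj j).sig v)
    refine (congrArg (endMap _) (stalkwiseSig_ι_of_eq_mk F hy.symm)).trans ?_
    rw [stalkwiseSig_ι_of_eq_mk F ((F.obj j).sig_eq_mk_w hy.symm)]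
    exact congrArg VEnd.mk (funext fun k => colimMap_stalkInvolution_ι F k j (y k))

def stalkwiseColimitCocone : Cocone F where
  pt := stalkwiseColimit F
  ι.app j :=
    { finf := (colimit.ι (F ⋙ pinfFun) j).hom
      f k := (colimit.ι (F ⋙ pkFun k) j).hom
      equivar k := LinearMap.ext fun v => (colimMap_stalkInvolution_ι F k j v).symm
      comm := congrArg ModuleCat.Hom.hom (colimit.ι_desc (stalkwiseSigCocone F) j).symm }
  ι.naturality _ _ φ := AHom.ext (LinearMap.ext (colimit.w_apply (F ⋙ pinfFun) φ))
    (funext fun k => LinearMap.ext (colimit.w_apply (F ⋙ pkFun k) φ))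

def stalkwiseColimitDesc (s : Cocone F) : stalkwiseColimit F ⟶ s.pt where
  finf := (colimit.desc (F ⋙ pinfFun) (pinfFun.mapCocone s)).hom
  f k := (colimit.desc (F ⋙ pkFun k) ((pkFun k).mapCocone s)).hom
  equivar k := ModuleCat.linearMap_ext_of_colimit fun j v =>
    (congrArg _ (colimMap_stalkInvolution_ι F k j v)).trans <|
      (colimit.ι_desc_apply ((pkFun k).mapCocone s) j _).trans <|
        ((s.ι.app j).f_w_apply k v).trans <|
          congrArg (s.pt.w k) (colimit.ι_desc_apply ((pkFun k).mapCocone s) j v).symm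
  comm := ModuleCat.linearMap_ext_of_colimit fun j v => by
    obtain ⟨y, hy⟩ := VEnd.mk_surjective ((F.obj j).sig v)
    refine (congrArg (endMap _) (stalkwiseSig_ι_of_eq_mk F hy.symm)).trans ?_
    refine (congrArg VEnd.mk
      (funext fun k => colimit.ι_desc_apply ((pkFun k).mapCocone s) j (y k))).trans ?_
    exact ((congrArg s.pt.sig (colimit.ι_desc_apply (pinfFun.mapCocone s) j v)).trans
      ((s.ι.app j).sig_finf_eq_mk hy.symm)).symm

def isColimitStalkwiseColimitCocone : IsColimit (stalkwiseColimitCocone F) where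
  desc := stalkwiseColimitDesc F
  fac s j := AHom.ext (LinearMap.ext fun v => colimit.ι_desc_apply (pinfFun.mapCocone s) j v)
    (funext fun k => LinearMap.ext fun v => colimit.ι_desc_apply ((pkFun k).mapCocone s) j v)
  uniq s _ hm := AHom.ext
    (ModuleCat.linearMap_ext_of_colimit fun j v =>
      (LinearMap.congr_fun (congrArg AHom.finf (hm j)) v).trans
        (colimit.ι_desc_apply (pinfFun.mapCocone s) j v).symm)
    (funext fun k => ModuleCat.linearMap_ext_of_colimit fun j v =>
      (LinearMap.congr_fun (congrArg (AHom.f · k) (hm j)) v).trans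
        (colimit.ι_desc_apply ((pkFun k).mapCocone s) j v).symm)

end AObj

end

section FilteredColimit

variable {J : Type u} [SmallCategory J] [IsFiltered J] {F : J ⥤ AObj.{u}} {c : Cocone F}
  (hinf : IsColimit (pinfFun.mapCocone c)) (hk : ∀ k, IsColimit ((pkFun k).mapCocone c))

include hinf hk

lemma exists_boxMap_ι_eq (p : BoxPlus 0 c.pt) :
    ∃ (j : J) (q : BoxPlus 0 (F.obj j)), boxMap (c.ι.app j) 0 q = p := by
  obtain ⟨⟨v, x⟩, hp, -⟩ := p
  obtain ⟨j, v₀, rfl⟩ := Concrete.isColimit_exists_rep _ hinf v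
  obtain ⟨y, hy⟩ := VEnd.mk_surjective ((F.obj j).sig v₀)
  obtain ⟨N, hN⟩ := VEnd.mk_eq_mk_iff.mp (((c.ι.app j).sig_finf_eq_mk hy.symm).symm.trans hp)
  obtain ⟨j', g, hz⟩ := IsFiltered.exists_hom_forall_lt
    (fun k j' _ => ∃ z : (F.obj j').V k, (c.ι.app j').f k z = x k)
    (fun k _ _ _ g' ⟨z, hz⟩ =>
      ⟨(F.map g').f k z, (((pkFun k).mapCocone c).w_apply g' z).trans hz⟩)
    (fun k => Concrete.exists_hom_ι_eq_of_isColimit _ (hk k) (x k) j) N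
  choose z hz using hz
  refine ⟨j', ⟨((F.map g).finf v₀,
    fun k => if h : k < N then z k h else (F.map g).f k (y k)), ?_, by simp⟩, ?_⟩
  · refine ((F.map g).sig_finf_eq_mk hy.symm).trans (VEnd.mk_eq_mk_iff.mpr ⟨N, fun k hk => ?_⟩)
    simp [not_lt.mpr hk]
  · refine Subtype.ext (Prod.ext ((pinfFun.mapCocone c).w_apply g v₀) (funext fun k => ?_))
    change (c.ι.app j').f k (if h : k < N then z k h else (F.map g).f k (y k)) = x k
    split_ifs with h
    · exact hz k h
    · exact (((pkFun k).mapCocone c).w_apply g (y k)).trans (hN k (not_lt.mp h))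

lemma exists_boxMap_map_eq_zero {j : J} (q : BoxPlus 0 (F.obj j))
    (hq : boxMap (c.ι.app j) 0 q = 0) :
    ∃ (j' : J) (g : j ⟶ j'), boxMap (F.map g) 0 q = 0 := by
  have hσ : (F.obj j).sig q.1.1 = VEnd.mk q.1.2 := q.2.1
  have hx : ∀ k, (c.ι.app j).f k (q.1.2 k) = 0 := fun k =>
    congrFun (congrArg (fun p => p.1.2) hq) k
  obtain ⟨j₁, g₁, hv : (F.map g₁).finf q.1.1 = 0⟩ :=
    ModuleCat.exists_map_eq_zero_of_isColimit hinf (congrArg (fun p => p.1.1) hq)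
  obtain ⟨N, hN⟩ := VEnd.mk_eq_zero_iff.mp
    (((F.map g₁).sig_finf_eq_mk hσ).symm.trans ((congrArg _ hv).trans (map_zero _)))
  obtain ⟨j₂, g₂, hg₂⟩ := IsFiltered.exists_hom_forall_lt
    (fun k _ g => (F.map g).f k ((F.map g₁).f k (q.1.2 k)) = 0)
    (fun k _ _ g g' h => by simp [h])
    (fun k => ModuleCat.exists_map_eq_zero_of_isColimit (hk k)
      ((((pkFun k).mapCocone c).w_apply g₁ (q.1.2 k)).trans (hx k))) N
  refine ⟨j₂, g₁ ≫ g₂, Subtype.ext (Prod.ext ?_ (funext fun k => ?_))⟩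
  · change (F.map (g₁ ≫ g₂)).finf q.1.1 = 0
    simp [hv]
  · change (F.map (g₁ ≫ g₂)).f k (q.1.2 k) = 0
    rcases lt_or_ge k N with h | h
    · simpa using hg₂ k h
    · simp [hN k h]

noncomputable def isColimitBox0MapCocone : IsColimit (box0Fun.mapCocone c) :=
  isColimitOfReflects (forget _) <| Types.FilteredColimit.isColimitOf' _ _
    (fun p => by
      obtain ⟨j, q, hq⟩ := exists_boxMap_ι_eq hinf hk p
      exact ⟨j, q, hq.symm⟩)
    (fun j (q q' : BoxPlus 0 (F.obj j)) h => by
      obtain ⟨j', g, hg⟩ := exists_boxMap_map_eq_zero hinf hk (q - q')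
        ((map_sub _ q q').trans (sub_eq_zero.mpr h))
      exact ⟨j', g, (sub_eq_zero.mp ((map_sub _ q q').symm.trans hg) :
        boxMap (F.map g) 0 q = boxMap (F.map g) 0 q')⟩)

end FilteredColimit

/-- the global-sections functor `⊞_1 = BoxPlus 0 : 𝒜(𝒟) → Mod` (sending
`V` to the pullback of `V_∞ → colim_n ∏_{k ≥ n} V_k ← ∏_{k ≥ 1} V_k`, with its
`ℤ/2`-action) preserves filtered colimits. -/
theorem statement7 :
    ∀ (J : Type u) [inst : SmallCategory J] [inst2 : IsFiltered J],
      Nonempty (PreservesColimitsOfShape J box0Fun.{u}) := by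
  intro J _ _
  exact ⟨⟨fun {F} => preservesColimit_of_preserves_colimit_cocone
    (AObj.isColimitStalkwiseColimitCocone F)
    (isColimitBox0MapCocone (colimit.isColimit _) fun _ => colimit.isColimit _)⟩⟩
end

section
/- For a filtered diagram (V^i) in the category A, the canonical map colim_i ⊞_1 V^i → ⊞_1 (colim_i V^i) is injective: if an element (v_∞, v_1, v_2, ...) of ⊞_1 V^j maps to zero in ⊞_1 colim_i V^i, then it maps to zero in colim_i ⊞_1 V^i. -/
open scoped TensorProduct

universe u

variable {V W U : ℕ → Type u}
  [∀ k, AddCommGroup (V k)] [∀ k, Module ℚ (V k)]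
  [∀ k, AddCommGroup (W k)] [∀ k, Module ℚ (W k)]
  [∀ k, AddCommGroup (U k)] [∀ k, Module ℚ (U k)]

open CategoryTheory

open CategoryTheory Limits

/-!
The stalk functors `p_∞` and `p_k` are left adjoints (of the objects concentrated at `∞`,
resp. coinduced at `k`), so colimits in `𝒜` are computed stalkwise, and in a filtered colimit of
vector spaces an element that dies in the colimit already dies at a finite stage.
Given `(v, x) ∈ ⊞ V^j` dying in the colimit, first kill `v` at some stage `j₁`. There
`σ(v) = [x]` forces `x` to vanish from some index `M` on, so only the finitely many stalks
`x₀, …, x_{M-1}` remain, and filteredness kills them at one common later stage.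
-/

lemma preservesColimit_forget_moduleCat {R : Type*} [Ring R] {J : Type u} [SmallCategory J]
    [IsFiltered J] (G : J ⥤ ModuleCat.{u} R) : PreservesColimit G (forget (ModuleCat.{u} R)) :=
  HasForget₂.forget_comp (C := ModuleCat.{u} R) (D := AddCommGrpCat.{u}) ▸
    (inferInstance : PreservesColimit G
      (forget₂ (ModuleCat.{u} R) AddCommGrpCat.{u} ⋙ forget AddCommGrpCat.{u}))

lemma ModuleCat.exists_map_eq_zero_of_isColimit_s8 {R : Type*} [Ring R] {J : Type u}
    [SmallCategory J] [IsFiltered J] {G : J ⥤ ModuleCat.{u} R} {D : Cocone G} (hD : IsColimit D)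
    {j : J} {x : G.obj j} (hx : D.ι.app j x = 0) : ∃ (j' : J) (f : j ⟶ j'), G.map f x = 0 := by
  have := preservesColimit_forget_moduleCat G
  obtain ⟨j', f, g, h⟩ :=
    (Concrete.isColimit_rep_eq_iff_exists G hD x (0 : G.obj j)).mp (by rw [hx, map_zero])
  exact ⟨j', f, by rw [h, map_zero]⟩

lemma IsFiltered.exists_hom_forall_lt {C : Type*} [Category C] [IsFilteredOrEmpty C] {j : C}
    (P : ℕ → ∀ ⦃j' : C⦄, (j ⟶ j') → Prop)
    (hP : ∀ k ⦃j' j'' : C⦄ (f : j ⟶ j') (g : j' ⟶ j''), P k f → P k (f ≫ g))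
    (hex : ∀ k, ∃ (j' : C) (f : j ⟶ j'), P k f) (N : ℕ) :
    ∃ (j' : C) (f : j ⟶ j'), ∀ k < N, P k f := by
  induction N with
  | zero => exact ⟨j, 𝟙 j, fun k hk => absurd hk (Nat.not_lt_zero k)⟩
  | succ N ih =>
    obtain ⟨j₁, f₁, hf₁⟩ := ih
    obtain ⟨j₂, f₂, hf₂⟩ := hex N
    obtain ⟨j₃, g₁, g₂, hg⟩ := IsFiltered.span f₁ f₂
    refine ⟨j₃, f₁ ≫ g₁, fun k hk => ?_⟩
    rcases Nat.lt_succ_iff_lt_or_eq.mp hk with hk | rfl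
    · exact hP k f₁ g₁ (hf₁ k hk)
    · exact hg ▸ hP k f₂ g₂ hf₂

lemma BoxPlus.eventually_snd_eq_zero {N : ℕ} {A : AObj.{u}} {p : A.Vinf × ∀ k, A.V k}
    (hp : p ∈ BoxPlus N A) (h : p.1 = 0) : ∃ M, ∀ k, M ≤ k → p.2 k = 0 :=
  (Submodule.Quotient.mk_eq_zero (evZero A.V)).mp (hp.1.symm.trans (by rw [h, map_zero]; rfl))

lemma VEnd.subsingleton_of_eventually (n : ℕ) (h : ∀ k, n ≤ k → Subsingleton (V k)) :
    Subsingleton (VEnd V) where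
  allEq x y := by
    obtain ⟨x, rfl⟩ := Submodule.Quotient.mk_surjective _ x
    obtain ⟨y, rfl⟩ := Submodule.Quotient.mk_surjective _ y
    exact (Submodule.Quotient.eq _).mpr ⟨n, fun k hk => (h k hk).elim _ _⟩

def constInf (M : Type u) [AddCommGroup M] [Module ℚ M] : AObj.{u} where
  Vinf := M
  V _ := PUnit
  w _ := LinearMap.id
  w_sq _ := rfl
  sig := 0
  sig_w := LinearMap.comp_zero _

def pinfHomEquiv (A : AObj.{u}) (M : ModuleCat.{u} ℚ) :
    (pinfFun.obj A ⟶ M) ≃ (A ⟶ constInf M) where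
  toFun g :=
    { finf := g.hom
      f := fun _ => 0
      equivar := fun _ => rfl
      comm := by
        have : Subsingleton (VEnd (constInf M).V) :=
          VEnd.subsingleton_of_eventually 0 fun _ _ => inferInstanceAs (Subsingleton PUnit)
        exact LinearMap.ext fun _ => Subsingleton.elim _ _ }
  invFun φ := ModuleCat.ofHom φ.finf
  left_inv _ := rfl
  right_inv _ := AHom.ext rfl (funext fun _ => LinearMap.ext fun _ => rfl)

instance pinfFun_isLeftAdjoint : pinfFun.{u}.IsLeftAdjoint :=
  (Adjunction.adjunctionOfEquivRight pinfHomEquiv fun _ _ _ _ _ =>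
    AHom.ext rfl (funext fun _ => LinearMap.ext fun _ => rfl)).isLeftAdjoint

/-- `M × M` with the swap is the `ℤ/2`-module coinduced from `M`; this makes `coindObj k`
right adjoint to the stalk functor `pkFun k`, which forgets the involution. -/
def coindObj (k : ℕ) (M : Type u) [AddCommGroup M] [Module ℚ M] : AObj.{u} where
  Vinf := PUnit
  V k' := PLift (k' = k) → M × M
  w _ := LinearMap.pi fun h =>
    ((LinearMap.snd ℚ M M).prod (LinearMap.fst ℚ M M)).comp (LinearMap.proj h)
  w_sq _ := rfl
  sig := 0
  sig_w := LinearMap.comp_zero _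

def castLin (A : AObj.{u}) {a b : ℕ} (h : a = b) : A.V a →ₗ[ℚ] A.V b :=
  h ▸ LinearMap.id

def coindHom {A : AObj.{u}} {M : Type u} [AddCommGroup M] [Module ℚ M] (k : ℕ)
    (g : A.V k →ₗ[ℚ] M) : A ⟶ coindObj k M where
  finf := 0
  f k' := LinearMap.pi fun h => (g.prod (g.comp (A.w k))).comp (castLin A h.down)
  equivar k' := by
    refine LinearMap.ext fun v => funext fun ⟨h⟩ => ?_
    subst h
    exact Prod.ext rfl (congrArg g (LinearMap.congr_fun (A.w_sq k') v))
  comm := by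
    have : Subsingleton (VEnd (coindObj k M).V) :=
      VEnd.subsingleton_of_eventually (k + 1) fun _ hk' =>
        ⟨fun _ _ => funext fun h => absurd h.down (by omega)⟩
    exact LinearMap.ext fun _ => Subsingleton.elim _ _

def pkHomEquiv (k : ℕ) (A : AObj.{u}) (M : ModuleCat.{u} ℚ) :
    ((pkFun k).obj A ⟶ M) ≃ (A ⟶ coindObj k M) where
  toFun g := coindHom k g.hom
  invFun φ :=
    ModuleCat.ofHom ((LinearMap.fst ℚ M M).comp ((LinearMap.proj ⟨rfl⟩).comp (φ.f k)))
  left_inv _ := rfl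
  right_inv φ := by
    refine AHom.ext (LinearMap.ext fun _ => rfl) (funext fun k' => ?_)
    refine LinearMap.ext fun v => funext fun ⟨h⟩ => ?_
    subst h
    have := congrArg (fun x => x ⟨rfl⟩) (LinearMap.congr_fun (φ.equivar k') v)
    exact Prod.ext rfl (congrArg Prod.fst this)

instance pkFun_isLeftAdjoint (k : ℕ) : (pkFun.{u} k).IsLeftAdjoint :=
  (Adjunction.adjunctionOfEquivRight (pkHomEquiv k) fun _ _ _ φ g => by
    refine AHom.ext (LinearMap.ext fun _ => rfl) (funext fun k' => ?_)
    refine LinearMap.ext fun v => funext fun ⟨h⟩ => ?_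
    subst h
    exact Prod.ext rfl (congrArg g.hom (LinearMap.congr_fun (φ.equivar k') v))).isLeftAdjoint

section FilteredColimit

variable {J : Type u} [SmallCategory J] [IsFiltered J] {F : J ⥤ AObj.{u}} {c : Cocone F}

lemma exists_map_finf_eq_zero (hc : IsColimit c) {j : J} {v : (F.obj j).Vinf}
    (hv : (c.ι.app j).finf v = 0) :
    ∃ (j' : J) (f : j ⟶ j'), (F.map f).finf v = 0 :=
  ModuleCat.exists_map_eq_zero_of_isColimit_s8 (isColimitOfPreserves pinfFun hc) hv

lemma exists_map_f_eq_zero (hc : IsColimit c) {j : J} {k : ℕ} {v : (F.obj j).V k}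
    (hv : (c.ι.app j).f k v = 0) :
    ∃ (j' : J) (f : j ⟶ j'), (F.map f).f k v = 0 :=
  ModuleCat.exists_map_eq_zero_of_isColimit_s8 (isColimitOfPreserves (pkFun k) hc) hv

lemma exists_boxMap_eq_zero (hc : IsColimit c) {N : ℕ} {j : J} (x : BoxPlus N (F.obj j))
    (hx : boxMap (c.ι.app j) N x = 0) : ∃ (j' : J) (f : j ⟶ j'), boxMap (F.map f) N x = 0 := by
  obtain ⟨⟨v, s⟩, hvs⟩ := x
  have hv : (c.ι.app j).finf v = 0 := congrArg (·.1.1) hx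
  have hs (k : ℕ) : (c.ι.app j).f k (s k) = 0 := congrFun (congrArg (·.1.2) hx) k
  obtain ⟨j₁, f₀, hf₀⟩ := exists_map_finf_eq_zero hc hv
  obtain ⟨M, hM⟩ := BoxPlus.eventually_snd_eq_zero (boxAmbient_mem (F.map f₀) N hvs) hf₀
  obtain ⟨j₂, f₁, hf₁⟩ := IsFiltered.exists_hom_forall_lt
    (fun k _ f => (F.map f).f k ((F.map f₀).f k (s k)) = 0)
    (fun k _ _ f g hf => by
      simp only [F.map_comp, AHom_comp_f, LinearMap.comp_apply, hf, map_zero])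
    (fun k => exists_map_f_eq_zero hc <| by
      rw [← hs k, ← c.w f₀]; rfl)
    M
  refine ⟨j₂, f₀ ≫ f₁, Subtype.ext (Prod.ext ?_ (funext fun k => ?_))⟩
  · show (F.map (f₀ ≫ f₁)).finf v = 0
    rw [F.map_comp, AHom_comp_finf, LinearMap.comp_apply, hf₀, map_zero]
  · show (F.map (f₀ ≫ f₁)).f k (s k) = 0
    rw [F.map_comp, AHom_comp_f, LinearMap.comp_apply]
    rcases lt_or_ge k M with hk | hk
    · exact hf₁ k hk
    · rw [show (F.map f₀).f k (s k) = 0 from hM k hk, map_zero]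

end FilteredColimit

/-- for a filtered diagram `(V^i)` in `𝒜(𝒟)` with colimit cocone `c`,
the canonical map `colim_i ⊞_1 V^i → ⊞_1 (colim_i V^i)` is injective: an element of
some `⊞_1 V^j` which maps to zero in `⊞_1 colim_i V^i` is already zero in
`colim_i ⊞_1 V^i`. -/
theorem statement8 (J : Type u) [SmallCategory J] [IsFiltered J] (F : J ⥤ AObj.{u})
    (c : Cocone F) (hc : IsColimit c) :
    Function.Injective
      (colimit.desc (F ⋙ box0Fun.{u}) (box0Fun.{u}.mapCocone c)) := by
  have := preservesColimit_forget_moduleCat (F ⋙ box0Fun.{u})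
  rw [injective_iff_map_eq_zero]
  intro a ha
  obtain ⟨j, x, rfl⟩ := Concrete.colimit_exists_rep (F ⋙ box0Fun.{u}) a
  have hx : boxMap (c.ι.app j) 0 x = 0 := by rwa [colimit.ι_desc_apply] at ha
  obtain ⟨j', f, hf⟩ := exists_boxMap_eq_zero hc x hx
  rw [← colimit.w_apply (F ⋙ box0Fun.{u}) f x]
  exact (congrArg _ hf).trans (map_zero _)
end

section
/- The category A has all small limits, where (lim_i V^i)_k = lim_i V^i_k for each k ≥ 1 and (lim_i V^i)_∞ = colim_N lim_i (⊞_N V^i)^{ℤ/2}, with structure map induced by the projections ⊞_N V^i → ∏_{k≥N} V^i_k. -/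
open scoped TensorProduct

universe u

variable {V W U : ℕ → Type u}
  [∀ k, AddCommGroup (V k)] [∀ k, Module ℚ (V k)]
  [∀ k, AddCommGroup (W k)] [∀ k, Module ℚ (W k)]
  [∀ k, AddCommGroup (U k)] [∀ k, Module ℚ (U k)]

open CategoryTheory

open CategoryTheory Limits

/-! Limits are computed stalkwise at finite `k`, as compatible families with the involution
acting componentwise. At `∞` one takes `colim_N lim_j (⊞_N F_j)^{ℤ/2}`; its structure map
reads off the coordinates and its legs are the first projections. A cone `s` lifts through
stage `0`: `σ v` has a representative in `∏ k, s_k` fixed by the involutions (average any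
representative with its image, using that `σ` is equivariant), which gives
`s_∞ → (⊞_0 s)^{ℤ/2} → lim_j (⊞_0 F_j)^{ℤ/2}`. The lift is unique because a point of the
colimit is determined by its structure map and its legs: if both vanish, a representative at
stage `N` has zero coordinates beyond some `M`, so it becomes zero at stage `max N M`. -/

def CategoryTheory.Limits.Cocone.ofSequence {C : Type*} [Category C] {G : ℕ ⥤ C} {T : C}
    (g : ∀ N, G.obj N ⟶ T) (hg : ∀ N, G.map (homOfLE (N.le_add_right 1)) ≫ g (N + 1) = g N) :
    Cocone G where
  pt := T
  ι := NatTrans.ofSequence g fun N => by simpa using hg N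

lemma ModuleCat.exists_colimit_ι_eq {R : Type*} [Ring R] {ι : Type*} [Preorder ι]
    [IsDirected ι (· ≤ ·)] [Nonempty ι] (G : ι ⥤ ModuleCat.{u} R) [HasColimit G]
    (y : ↑(colimit G)) : ∃ i, ∃ x : ↑(G.obj i), colimit.ι G i x = y := by
  let S : ι → Submodule R ↑(colimit G) := fun i => LinearMap.range (colimit.ι G i).hom
  have hmono : Monotone S := fun i i' h => by
    rintro _ ⟨x, rfl⟩
    exact ⟨G.map (homOfLE h) x, colimit.w_apply G (homOfLE h) x⟩
  have hsup : ⨆ i, S i = ⊤ := by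
    have hzero : ModuleCat.ofHom (⨆ i, S i).mkQ = 0 := colimit.hom_ext fun i => by
      ext x
      simpa using Submodule.mem_iSup_of_mem (p := S) i ⟨x, rfl⟩
    have hmkQ : (⨆ i, S i).mkQ = 0 := by simpa using congrArg ModuleCat.Hom.hom hzero
    rw [← Submodule.ker_mkQ (⨆ i, S i), hmkQ, LinearMap.ker_zero]
  have hy : y ∈ ⨆ i, S i := hsup ▸ Submodule.mem_top
  obtain ⟨i, x, rfl⟩ := (Submodule.mem_iSup_of_directed S hmono.directed_le).1 hy
  exact ⟨i, x, rfl⟩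

noncomputable def VEnd.out : VEnd V →ₗ[ℚ] ∀ k, V k :=
  ((VEnd.mk (V := V)).exists_rightInverse_of_surjective (evZero V).range_mkQ).choose

@[simp] lemma VEnd.mk_out (z : VEnd V) : VEnd.mk (VEnd.out z) = z :=
  LinearMap.congr_fun
    ((VEnd.mk (V := V)).exists_rightInverse_of_surjective (evZero V).range_mkQ).choose_spec z

namespace AObj

variable (A : AObj.{u})

lemma w_w (k : ℕ) (t : A.V k) : A.w k (A.w k t) = t :=
  LinearMap.congr_fun (A.w_sq k) t

lemma endMap_w_sig (v : A.Vinf) : endMap A.w (A.sig v) = A.sig v :=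
  LinearMap.congr_fun A.sig_w v

noncomputable def fixedLift : A.Vinf →ₗ[ℚ] ∀ k, A.V k :=
  (1 / 2 : ℚ) • (LinearMap.id + LinearMap.pi fun k => A.w k ∘ₗ LinearMap.proj k) ∘ₗ
    VEnd.out ∘ₗ A.sig

lemma fixedLift_apply (v : A.Vinf) (k : ℕ) :
    A.fixedLift v k = (1 / 2 : ℚ) • (VEnd.out (A.sig v) k + A.w k (VEnd.out (A.sig v) k)) :=
  rfl

lemma mk_fixedLift (v : A.Vinf) : VEnd.mk (A.fixedLift v) = A.sig v := by
  have hw : VEnd.mk (fun k => A.w k (VEnd.out (A.sig v) k)) = A.sig v := by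
    rw [← endMap_mk, VEnd.mk_out, endMap_w_sig]
  have havg : A.fixedLift v =
      (1 / 2 : ℚ) • (VEnd.out (A.sig v) + fun k => A.w k (VEnd.out (A.sig v) k)) :=
    rfl
  rw [havg, map_smul, map_add, hw, VEnd.mk_out, ← two_smul ℚ, smul_smul]
  norm_num

lemma w_fixedLift (v : A.Vinf) (k : ℕ) : A.w k (A.fixedLift v k) = A.fixedLift v k := by
  rw [fixedLift_apply, map_smul, map_add, w_w, add_comm]

noncomputable def toBoxW0 : A.Vinf →ₗ[ℚ] BoxW 0 A :=
  LinearMap.codRestrict _ (LinearMap.prod LinearMap.id A.fixedLift) fun v =>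
    ⟨⟨(A.mk_fixedLift v).symm, fun _ hk => absurd hk (Nat.not_lt_zero _)⟩, A.w_fixedLift v⟩

end AObj

lemma zeroAmbient_snd (A : AObj.{u}) (N : ℕ) (p : A.Vinf × ∀ k, A.V k) (k : ℕ) :
    (zeroAmbient A N p).2 k = if k = N then 0 else p.2 k := by
  by_cases h : k = N <;> simp [zeroAmbient, h]

namespace AObj.HasLimits

variable {J : Type u} [SmallCategory J] (F : J ⥤ AObj.{u})

/-- `lim_j (⊞_N F_j)^{ℤ/2}`. -/
noncomputable abbrev boxLim (N : ℕ) : ModuleCat.{u} ℚ := limit (F ⋙ boxWFun.{u} N)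

noncomputable def boxLimπ (N : ℕ) (j : J) :
    boxLim F N →ₗ[ℚ] (F.obj j).Vinf × ∀ k, (F.obj j).V k :=
  (BoxW N (F.obj j)).subtype ∘ₗ (limit.π (F ⋙ boxWFun.{u} N) j).hom

lemma boxLimπ_mem (N : ℕ) (j : J) (x : boxLim F N) : boxLimπ F N j x ∈ BoxW N (F.obj j) :=
  ((limit.π (F ⋙ boxWFun.{u} N) j).hom x).2

lemma boxLimπ_map (N : ℕ) {j j' : J} (g : j ⟶ j') (x : boxLim F N) :
    boxLimπ F N j' x = boxAmbient (F.map g) (boxLimπ F N j x) :=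
  congrArg Subtype.val (limit.w_apply (F ⋙ boxWFun.{u} N) g x).symm

lemma boxLimπ_limMap_zeroNatTrans (N : ℕ) (j : J) (x : boxLim F N) :
    boxLimπ F (N + 1) j (limMap (Functor.whiskerLeft F (zeroNatTrans.{u} N)) x) =
      zeroAmbient (F.obj j) N (boxLimπ F N j x) :=
  congrArg Subtype.val (limMap_π_apply (Functor.whiskerLeft F (zeroNatTrans.{u} N)) j x)

lemma boxLim_ext {N : ℕ} {x y : boxLim F N} (h : ∀ j, boxLimπ F N j x = boxLimπ F N j y) :
    x = y :=
  Concrete.limit_ext _ x y fun j => Subtype.ext (h j)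

/-- `lim_j F_{j,k}`. -/
def stalkLim (k : ℕ) : Submodule ℚ (∀ j, (F.obj j).V k) where
  carrier := {x | ∀ ⦃j j'⦄ (g : j ⟶ j'), (F.map g).f k (x j) = x j'}
  add_mem' hx hy j j' g := by simp only [Pi.add_apply, map_add, hx g, hy g]
  zero_mem' j j' g := map_zero _
  smul_mem' c x hx j j' g := by simp only [Pi.smul_apply, map_smul, hx g]

def stalkLimInvol (k : ℕ) : stalkLim F k →ₗ[ℚ] stalkLim F k :=
  (LinearMap.pi fun j => (F.obj j).w k ∘ₗ LinearMap.proj j).restrict fun x hx j j' g => by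
    simpa [hx g] using LinearMap.congr_fun ((F.map g).equivar k) (x j)

lemma stalkLimInvol_sq (k : ℕ) : stalkLimInvol F k ∘ₗ stalkLimInvol F k = LinearMap.id :=
  LinearMap.ext fun x => Subtype.ext <| funext fun j => (F.obj j).w_w k (x.1 j)

noncomputable def boxLimStalk (N k : ℕ) : boxLim F N →ₗ[ℚ] stalkLim F k :=
  LinearMap.codRestrict _
    (LinearMap.pi fun j => (LinearMap.proj k ∘ₗ LinearMap.snd ℚ _ _) ∘ₗ boxLimπ F N j)
    fun x _ _ g => by simp [boxLimπ_map F N g x, boxAmbient]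

lemma boxLimStalk_apply (N k : ℕ) (x : boxLim F N) (j : J) :
    (boxLimStalk F N k x).1 j = (boxLimπ F N j x).2 k :=
  rfl

noncomputable def boxLimSig (N : ℕ) : boxLim F N →ₗ[ℚ] VEnd fun k => stalkLim F k :=
  VEnd.mk ∘ₗ LinearMap.pi (boxLimStalk F N)

noncomputable abbrev boxLimSeq : ℕ ⥤ ModuleCat.{u} ℚ :=
  Functor.ofSequence fun N => limMap (Functor.whiskerLeft F (zeroNatTrans.{u} N))

lemma ι_limMap_zeroNatTrans (N : ℕ) (x : boxLim F N) :
    colimit.ι (boxLimSeq F) (N + 1) (limMap (Functor.whiskerLeft F (zeroNatTrans.{u} N)) x) =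
      colimit.ι (boxLimSeq F) N x := by
  have h := colimit.w_apply (boxLimSeq F) (homOfLE (N.le_add_right 1)) x
  rwa [Functor.ofSequence_map_homOfLE_succ] at h

lemma boxLimSig_limMap_zeroNatTrans (N : ℕ) (x : boxLim F N) :
    boxLimSig F (N + 1) (limMap (Functor.whiskerLeft F (zeroNatTrans.{u} N)) x) =
      boxLimSig F N x := by
  refine (Submodule.Quotient.eq _).2 ⟨N + 1, fun k hk => Subtype.ext <| funext fun j => ?_⟩
  simp only [Pi.sub_apply, LinearMap.pi_apply, Submodule.coe_sub, boxLimStalk_apply,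
    boxLimπ_limMap_zeroNatTrans, zeroAmbient_snd, if_neg (show k ≠ N by omega), sub_self]
  rfl

/-- `colim_N lim_j (⊞_N F_j)^{ℤ/2}`, the stalk at `∞` of the limit. -/
noncomputable abbrev limInf : ModuleCat.{u} ℚ := colimit (boxLimSeq F)

noncomputable def limSig : limInf F →ₗ[ℚ] VEnd fun k => stalkLim F k :=
  (colimit.desc (boxLimSeq F) (Cocone.ofSequence (fun N => ModuleCat.ofHom (boxLimSig F N))
    fun N => by
      rw [Functor.ofSequence_map_homOfLE_succ]
      exact ModuleCat.hom_ext <| LinearMap.ext <| boxLimSig_limMap_zeroNatTrans F N)).hom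

lemma limSig_ι (N : ℕ) (x : boxLim F N) :
    limSig F (colimit.ι (boxLimSeq F) N x) = boxLimSig F N x :=
  colimit.ι_desc_apply _ _ _

noncomputable def limInfπ (j : J) : limInf F →ₗ[ℚ] (F.obj j).Vinf :=
  (colimit.desc (boxLimSeq F)
    (Cocone.ofSequence (fun N => ModuleCat.ofHom (LinearMap.fst ℚ _ _ ∘ₗ boxLimπ F N j))
      fun N => by
        rw [Functor.ofSequence_map_homOfLE_succ]
        ext x
        have hfst := congrArg Prod.fst (boxLimπ_limMap_zeroNatTrans F N j x)
        exact hfst)).hom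

lemma limInfπ_ι (j : J) (N : ℕ) (x : boxLim F N) :
    limInfπ F j (colimit.ι (boxLimSeq F) N x) = (boxLimπ F N j x).1 :=
  colimit.ι_desc_apply _ _ _

lemma exists_ι_eq (v : limInf F) : ∃ N, ∃ x : boxLim F N, colimit.ι (boxLimSeq F) N x = v :=
  ModuleCat.exists_colimit_ι_eq _ v

lemma stalkLimInvol_boxLimStalk (N k : ℕ) (x : boxLim F N) :
    stalkLimInvol F k (boxLimStalk F N k x) = boxLimStalk F N k x :=
  Subtype.ext <| funext fun j => (boxLimπ_mem F N j x).2 k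

lemma endMap_stalkLimInvol_limSig (v : limInf F) :
    endMap (stalkLimInvol F) (limSig F v) = limSig F v := by
  obtain ⟨N, x, rfl⟩ := exists_ι_eq F v
  simp only [limSig_ι, boxLimSig, LinearMap.comp_apply, endMap_mk, LinearMap.pi_apply,
    stalkLimInvol_boxLimStalk]
  rfl

noncomputable def limObj : AObj.{u} where
  Vinf := limInf F
  V k := stalkLim F k
  w := stalkLimInvol F
  w_sq := stalkLimInvol_sq F
  sig := limSig F
  sig_w := LinearMap.ext (endMap_stalkLimInvol_limSig F)

noncomputable def limπ (j : J) : limObj F ⟶ F.obj j where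
  finf := limInfπ F j
  f k := LinearMap.proj j ∘ₗ (stalkLim F k).subtype
  equivar _ := rfl
  comm := LinearMap.ext fun v => by
    obtain ⟨N, x, rfl⟩ := exists_ι_eq F v
    change endMap _ (limSig F _) = (F.obj j).sig (limInfπ F j _)
    rw [limSig_ι, limInfπ_ι, (boxLimπ_mem F N j x).1.1]
    rfl

noncomputable def limCone : Cone F where
  pt := limObj F
  π.app := limπ F
  π.naturality j j' g := by
    refine (Category.id_comp _).trans (AHom.ext (LinearMap.ext fun v => ?_) ?_)
    · obtain ⟨N, x, rfl⟩ := exists_ι_eq F v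
      change limInfπ F j' _ = (F.map g).finf (limInfπ F j _)
      rw [limInfπ_ι, limInfπ_ι, boxLimπ_map F N g x]
      rfl
    · exact funext fun k => LinearMap.ext fun x => (x.2 g).symm

/-- Pushed to a stage `≥ M`, such an element is zero. -/
lemma ι_eq_zero_of_vanishing {M N : ℕ} (x : boxLim F N)
    (hinf : ∀ j, (boxLimπ F N j x).1 = 0) (hfin : ∀ j k, M ≤ k → (boxLimπ F N j x).2 k = 0) :
    colimit.ι (boxLimSeq F) N x = 0 := by
  obtain ⟨d, hd⟩ : ∃ d, M ≤ N + d := ⟨M, by omega⟩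
  induction d generalizing N with
  | zero =>
    suffices x = 0 by subst this; exact map_zero _
    refine boxLim_ext F fun j => Prod.ext (by simpa using hinf j) (funext fun k => ?_)
    rw [map_zero]
    rcases lt_or_ge k N with hk | hk
    · exact (boxLimπ_mem F N j x).1.2 k hk
    · exact hfin j k (by omega)
  | succ d ih =>
    rw [← ι_limMap_zeroNatTrans]
    refine ih _ (fun j => ?_) (fun j k hk => ?_) (by omega) <;>
      rw [boxLimπ_limMap_zeroNatTrans]
    · exact hinf j
    · rw [zeroAmbient_snd]
      split_ifs
      · rfl
      · exact hfin j k hk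

lemma limInf_ext {v v' : limInf F} (hsig : limSig F v = limSig F v')
    (hπ : ∀ j, limInfπ F j v = limInfπ F j v') : v = v' := by
  rw [← sub_eq_zero]
  obtain ⟨N, x, hx⟩ := exists_ι_eq F (v - v')
  have hsig0 : boxLimSig F N x = 0 := by rw [← limSig_ι, hx, map_sub, hsig, sub_self]
  obtain ⟨M, hM⟩ := (Submodule.Quotient.mk_eq_zero _).1 hsig0
  rw [← hx]
  refine ι_eq_zero_of_vanishing F (M := M) x (fun j => ?_) (fun j k hk => ?_)
  · rw [← limInfπ_ι, hx, map_sub, hπ j, sub_self]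
  · exact congrFun (congrArg Subtype.val (hM k hk)) j

lemma limObj_hom_ext {X : AObj.{u}} {m m' : X ⟶ limObj F}
    (h : ∀ j, m ≫ limπ F j = m' ≫ limπ F j) : m = m' := by
  have hf : m.f = m'.f := funext fun k => LinearMap.ext fun t => Subtype.ext <| funext fun j =>
    LinearMap.congr_fun (congrFun (congrArg AHom.f (h j)) k) t
  refine AHom.ext (LinearMap.ext fun v => limInf_ext F ?_ fun j => ?_) hf
  · refine (LinearMap.congr_fun m.comm v).symm.trans ?_
    rw [hf]
    exact LinearMap.congr_fun m'.comm v
  · exact LinearMap.congr_fun (congrArg AHom.finf (h j)) v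

section Lift

variable {F} (s : Cone F)

lemma boxLimπ_lift (N : ℕ) (j : J) (p : BoxW N s.pt) :
    boxLimπ F N j (limit.lift (F ⋙ boxWFun.{u} N) ((boxWFun.{u} N).mapCone s) p) =
      boxAmbient (s.π.app j) p.1 := by
  have h := limit.lift_π_apply ((boxWFun.{u} N).mapCone s) j p
  exact congrArg Subtype.val h

noncomputable def liftStalk (k : ℕ) : s.pt.V k →ₗ[ℚ] stalkLim F k :=
  LinearMap.codRestrict _ (LinearMap.pi fun j => (s.π.app j).f k) fun t _ _ g =>
    LinearMap.congr_fun (congrFun (congrArg AHom.f (s.w g)) k) t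

noncomputable def liftInf : s.pt.Vinf →ₗ[ℚ] limInf F :=
  (colimit.ι (boxLimSeq F) 0).hom ∘ₗ
    (limit.lift (F ⋙ boxWFun.{u} 0) ((boxWFun.{u} 0).mapCone s)).hom ∘ₗ s.pt.toBoxW0

lemma liftInf_apply (v : s.pt.Vinf) :
    liftInf s v = colimit.ι (boxLimSeq F) 0
      (limit.lift (F ⋙ boxWFun.{u} 0) ((boxWFun.{u} 0).mapCone s) (s.pt.toBoxW0 v)) :=
  rfl

noncomputable def lift : s.pt ⟶ limObj F where
  finf := liftInf s
  f := liftStalk s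
  equivar k := LinearMap.ext fun t => Subtype.ext <| funext fun j =>
    LinearMap.congr_fun ((s.π.app j).equivar k) t
  comm := LinearMap.ext fun v => by
    change endMap (liftStalk s) (s.pt.sig v) = limSig F (liftInf s v)
    rw [liftInf_apply, limSig_ι, ← s.pt.mk_fixedLift, endMap_mk]
    refine congrArg VEnd.mk (funext fun k => Subtype.ext <| funext fun j => ?_)
    change _ = (boxLimStalk F 0 k _).1 j
    rw [boxLimStalk_apply, boxLimπ_lift]
    rfl

lemma lift_π (j : J) : lift s ≫ limπ F j = s.π.app j := by
  refine AHom.ext (LinearMap.ext fun v => ?_) rfl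
  change limInfπ F j (liftInf s v) = _
  rw [liftInf_apply, limInfπ_ι, boxLimπ_lift]
  rfl

end Lift

noncomputable def limConeIsLimit : IsLimit (limCone F) where
  lift := lift
  fac := lift_π
  uniq s _ hm := limObj_hom_ext F fun j => (hm j).trans (lift_π s j).symm

noncomputable def isLimitMapConeLimCone (k : ℕ) :
    IsLimit ((pkFun.{u} k).mapCone (limCone F)) where
  lift t := ModuleCat.ofHom <| LinearMap.codRestrict _ (LinearMap.pi fun j => (t.π.app j).hom)
    fun x _ _ g => ConcreteCategory.congr_hom (t.w g) x
  fac _ _ := rfl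
  uniq _ _ hm := ModuleCat.hom_ext <| LinearMap.ext fun x => Subtype.ext <| funext fun j =>
    ConcreteCategory.congr_hom (hm j) x

end AObj.HasLimits

/-- the category `𝒜(𝒟)` has all small limits; they are computed by
`(lim_i V^i)_k = lim_i V^i_k` on the finite stalks (i.e. each stalk functor `p_k` sends a
limit cone to a limit cone), while the stalk at `∞` is
`(lim_i V^i)_∞ = colim_N lim_i (⊞_N V^i)^{ℤ/2}`, the colimit over `N` (along the maps
induced by the natural transformations `(⊞_N)^{ℤ/2} ⟶ (⊞_{N+1})^{ℤ/2}`) of the limits of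
the `ℤ/2`-fixed points of `⊞_N`. -/
theorem statement9 :
    HasLimits AObj.{u} ∧
    ∀ (J : Type u) [inst : SmallCategory J] (F : J ⥤ AObj.{u}),
      ∃ c : Cone F, Nonempty (IsLimit c) ∧
        (∀ k, Nonempty (IsLimit ((pkFun.{u} k).mapCone c))) ∧
        Nonempty ((pinfFun.{u}).obj c.pt ≅
          colimit (Functor.ofSequence fun N =>
            limMap (Functor.whiskerLeft F (zeroNatTrans.{u} N)))) :=
  ⟨⟨fun _ _ => ⟨fun F => ⟨_, AObj.HasLimits.limConeIsLimit F⟩⟩⟩,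
    fun _ _ F => ⟨AObj.HasLimits.limCone F, ⟨AObj.HasLimits.limConeIsLimit F⟩,
      fun k => ⟨AObj.HasLimits.isLimitMapConeLimCone F k⟩, ⟨Iso.refl _⟩⟩⟩
end

section
/- For M a ℚ-vector space, define cM ∈ A by (cM)_k = M for all k, (cM)_∞ = M, with structure map induced by the diagonal M → ∏_{k≥1} M. Then c is left adjoint to the functor V ↦ (⊞_1 V)^{ℤ/2}: there is a natural bijection A(cM, V) ≅ Hom_ℚ(M, (⊞_1 V)^{ℤ/2}). -/
open scoped TensorProduct

universe u

variable {V W U : ℕ → Type u}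
  [∀ k, AddCommGroup (V k)] [∀ k, Module ℚ (V k)]
  [∀ k, AddCommGroup (W k)] [∀ k, Module ℚ (W k)]
  [∀ k, AddCommGroup (U k)] [∀ k, Module ℚ (U k)]

open CategoryTheory

instance (A B : AObj.{u}) : Add (A ⟶ B) := inferInstanceAs (Add (AHom A B))
instance (A B : AObj.{u}) : Zero (A ⟶ B) := inferInstanceAs (Zero (AHom A B))
instance (A B : AObj.{u}) : SMul ℚ (A ⟶ B) := inferInstanceAs (SMul ℚ (AHom A B))

open CategoryTheory Limits

/-- The morphism `cM → cN` induced by a linear map `M → N`. -/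
def cMap {M N : Type u} [AddCommGroup M] [Module ℚ M] [AddCommGroup N] [Module ℚ N]
    (f : M →ₗ[ℚ] N) : cObj M ⟶ cObj N :=
  ⟨f, fun _ => f, fun _ => rfl, LinearMap.ext fun _ => rfl⟩

/-! A morphism `cM ⟶ A` is a compatible family of linear maps out of `M`. Since `ℤ/2` acts
trivially on `cM`, equivariance says each `φ_k` lands in the fixed points of `A.V k`, and
compatibility with the diagonal structure map says `σ ∘ φ_∞ = [(φ_k)_k]`; together these are
exactly the conditions cutting out `(⊞_1 A)^{ℤ/2}` inside `A_∞ × ∏_k A_k`. -/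

section ConstantAdjunction

variable {M : Type u} [AddCommGroup M] [Module ℚ M] {A : AObj.{u}}

lemma AHom.apply_mem_boxW_zero (φ : cObj M ⟶ A) (m : M) :
    (φ.finf m, fun k => φ.f k m) ∈ BoxW 0 A :=
  ⟨⟨(LinearMap.congr_fun φ.comm m).symm, fun _ hk => absurd hk (Nat.not_lt_zero _)⟩,
    fun k => (LinearMap.congr_fun (φ.equivar k) m).symm⟩

def AHom.toBoxW (φ : cObj M ⟶ A) : M →ₗ[ℚ] BoxW 0 A :=
  LinearMap.codRestrict (BoxW 0 A) (φ.finf.prod (LinearMap.pi φ.f)) φ.apply_mem_boxW_zero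

def AHom.ofBoxW (f : M →ₗ[ℚ] BoxW 0 A) : cObj M ⟶ A where
  finf := (LinearMap.fst ℚ _ _) ∘ₗ (BoxW 0 A).subtype ∘ₗ f
  f k := LinearMap.proj k ∘ₗ LinearMap.snd ℚ _ _ ∘ₗ (BoxW 0 A).subtype ∘ₗ f
  equivar k := LinearMap.ext fun m => ((f m).2.2 k).symm
  comm := LinearMap.ext fun m => (f m).2.1.1.symm

def cObjHomEquiv : (cObj M ⟶ A) ≃ (M →ₗ[ℚ] BoxW 0 A) where
  toFun := AHom.toBoxW
  invFun := AHom.ofBoxW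
  left_inv _ := rfl
  right_inv _ := rfl

lemma cObjHomEquiv_comp {B : AObj.{u}} (φ : cObj M ⟶ A) (g : A ⟶ B) :
    cObjHomEquiv (φ ≫ g) = boxWMap g 0 ∘ₗ cObjHomEquiv φ :=
  rfl

lemma cObjHomEquiv_cMap_comp {N : Type u} [AddCommGroup N] [Module ℚ N] (h : N →ₗ[ℚ] M)
    (φ : cObj M ⟶ A) : cObjHomEquiv (cMap h ≫ φ) = cObjHomEquiv φ ∘ₗ h :=
  rfl

end ConstantAdjunction

/-- the constant-object functor `c` is left adjoint to the global sections
functor `V ↦ (⊞_1 V)^{ℤ/2}`: there is a bijection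
`𝒜(𝒟)(cM, V) ≅ Hom_ℚ(M, (⊞_1 V)^{ℤ/2})`, natural in both variables. -/
theorem statement10 :
    ∃ e : ∀ (M : ModuleCat.{u} ℚ) (A : AObj.{u}), (cObj M ⟶ A) ≃ (M →ₗ[ℚ] ↥(BoxW 0 A)),
      (∀ (M : ModuleCat.{u} ℚ) (A B : AObj.{u}) (g : A ⟶ B) (φ : cObj M ⟶ A),
        e M B (φ ≫ g) = (boxWMap g 0).comp (e M A φ)) ∧
      (∀ (M N : ModuleCat.{u} ℚ) (h : N ⟶ M) (A : AObj.{u}) (φ : cObj M ⟶ A),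
        e N A (cMap h.hom ≫ φ) = (e M A φ).comp h.hom) :=
  ⟨fun _ _ => cObjHomEquiv, fun _ _ _ g φ => cObjHomEquiv_comp φ g,
    fun _ _ h _ φ => cObjHomEquiv_cMap_comp h.hom φ⟩
end
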